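/- For the distorted Freudenthal simplex σ_δ in ℝ^d with 0 < δ ≤ 1, the distance from vertex v^0_δ = 0 to the affine hyperplane through the other d vertices equals δ√d / √(δ²d - δ² + 1), and for 1 ≤ i ≤ d-1 the distance from v^i_δ to the affine hyperplane through the other vertices equals 1/√2. -/

import Mathlib

open Finset

/-- Vertices of the diagonally distorted Freudenthal simplex:
`v^i_δ = T_δ(v^i)` where `v^i ∈ {0,1}^d` has its last `i` coordinates equal to `1`,
i.e. `v^i_δ = (1/d)·(-i+iδ,…,-i+iδ, d-i+iδ,…,d-i+iδ)` with `d-i` copies of the first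
value and `i` copies of the second. -/
noncomputable def vFT (d : ℕ) (δ : ℝ) (i : Fin (d + 1)) : EuclideanSpace ℝ (Fin d) :=
  WithLp.toLp 2 fun k => (if d - (i : ℕ) ≤ (k : ℕ) then (1 : ℝ) else 0) - ((1 - δ) / d) * (i : ℕ)

/-- The point `C_δ = δ²·(1/2,…,1/2) + (1-δ²)·(1/(2d))·(-d+1, -d+3, …, d-3, d-1)`. -/
noncomputable def cFT (d : ℕ) (δ : ℝ) : EuclideanSpace ℝ (Fin d) :=
  WithLp.toLp 2 fun k => δ ^ 2 * (1 / 2) + (1 - δ ^ 2) * ((-(d : ℝ) + 1 + 2 * (k : ℕ)) / (2 * d))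

/-!
Each distance is read off from a normal vector `n` of the facet (a linear functional constant on
the vertices of the facet) together with the foot of the perpendicular, a point of the facet's
affine span that differs from the vertex by a multiple of `n`. Opposite `v^0_δ = 0` the functional
is `(1 - δ) ∑ₖ xₖ + δ d x_{d-1}`, equal to `δ d` on every other vertex, and the foot lies on the
edge from `v^1_δ` to `v^d_δ`. Opposite `v^i_δ`, `1 ≤ i ≤ d - 1`, it is `x_{d-i} - x_{d-i-1}`,
the indicator of `v^i_δ` on the vertices, and the foot is the midpoint of `v^{i-1}_δ` and
`v^{i+1}_δ`. (Coordinates are indexed from `0`.)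
-/

open Metric
open scoped RealInnerProductSpace

section Hyperplane

variable {E : Type*} [NormedAddCommGroup E] [InnerProductSpace ℝ E]

theorem inner_eq_of_mem_affineSpan {S : Set E} {n y : E} {c : ℝ}
    (hS : ∀ x ∈ S, ⟪n, x⟫ = c) (hy : y ∈ affineSpan ℝ S) : ⟪n, y⟫ = c := by
  refine affineSpan_induction hy hS fun a u v w hu hv hw ↦ ?_
  simp [inner_add_right, inner_sub_right, real_inner_smul_right, hu, hv, hw]

theorem infDist_affineSpan_eq_of_sub_eq_smul {S : Set E} {n p q : E} {c t : ℝ}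
    (hS : ∀ x ∈ S, ⟪n, x⟫ = c) (hq : q ∈ affineSpan ℝ S) (hpq : p - q = t • n) :
    infDist p (affineSpan ℝ S) = |t| * ‖n‖ := by
  have hdist : dist p q = |t| * ‖n‖ := by rw [dist_eq_norm, hpq, norm_smul, Real.norm_eq_abs]
  refine le_antisymm (hdist ▸ infDist_le_dist_of_mem hq) ((le_infDist ⟨q, hq⟩).2 fun y hy ↦ ?_)
  have horth : ⟪p - q, q - y⟫ = 0 := by
    rw [hpq, real_inner_smul_left, inner_sub_right, inner_eq_of_mem_affineSpan hS hq,
      inner_eq_of_mem_affineSpan hS hy, sub_self, mul_zero]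
  have hpyth : dist p y * dist p y = dist p q * dist p q + ‖q - y‖ * ‖q - y‖ := by
    rw [dist_eq_norm, dist_eq_norm, ← norm_add_sq_eq_norm_sq_add_norm_sq_real horth,
      sub_add_sub_cancel]
  rw [← hdist]
  nlinarith [sq_nonneg ‖q - y‖, dist_nonneg (x := p) (y := y), dist_nonneg (x := p) (y := q)]

end Hyperplane

section Freudenthal

variable {δ : ℝ}

@[simp]
theorem vFT_apply (d : ℕ) (j : Fin (d + 1)) (k : Fin d) :
    vFT d δ j k = (if d - (j : ℕ) ≤ (k : ℕ) then 1 else 0) - (1 - δ) / d * (j : ℕ) :=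
  rfl

theorem vFT_zero (d : ℕ) : vFT d δ 0 = 0 := by
  ext k
  simp [k.isLt]

theorem sum_vFT (d : ℕ) (j : Fin (d + 1)) : ∑ k, vFT d δ j k = δ * j := by
  obtain rfl | hd := eq_or_ne d 0
  · simp [Fin.fin_one_eq_zero j]
  have hcard : ∑ k : Fin d, (if d - (j : ℕ) ≤ (k : ℕ) then (1 : ℝ) else 0) = j := by
    rw [Fin.sum_univ_eq_sum_range (fun k ↦ if d - (j : ℕ) ≤ k then (1 : ℝ) else 0),
      sum_boole, range_eq_Ico, Ico_filter_le, Nat.card_Ico]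
    norm_cast
    omega
  simp only [vFT_apply, sum_sub_distrib, hcard, sum_const, card_univ, Fintype.card_fin,
    nsmul_eq_mul]
  field_simp
  ring

theorem inner_single_sub_single_vFT (m : ℕ) (k : Fin m) (j : Fin (m + 2)) :
    ⟪EuclideanSpace.single k.succ 1 - EuclideanSpace.single k.castSucc 1, vFT (m + 1) δ j⟫ =
      if (j : ℕ) + k = m then 1 else 0 := by
  simp only [inner_sub_left, EuclideanSpace.inner_single_left, vFT_apply, Fin.val_succ,
    Fin.val_castSucc, map_one, one_mul]
  split_ifs <;> first | (exfalso; omega) | ring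

/- With `d = m + 1`, `j.succ.castSucc` is the vertex `v^{j+1}`, and `j.rev.succ`, `j.rev.castSucc`
are the coordinates `d - (j + 1)` and `d - (j + 1) - 1`. -/
theorem vFT_sub_midpoint (m : ℕ) (j : Fin m) :
    vFT (m + 1) δ j.succ.castSucc -
        midpoint ℝ (vFT (m + 1) δ j.castSucc.castSucc) (vFT (m + 1) δ j.succ.succ) =
      (1 / 2 : ℝ) •
        (EuclideanSpace.single j.rev.succ 1 - EuclideanSpace.single j.rev.castSucc 1) := by
  ext k
  simp only [Fin.castSucc_succ, midpoint_eq_smul_add, invOf_eq_inv, smul_add, PiLp.sub_apply,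
    vFT_apply, Fin.val_succ, Fin.val_castSucc, Nat.reduceSubDiff, tsub_le_iff_right, Nat.cast_add,
    Nat.cast_one, PiLp.add_apply, PiLp.smul_apply, Order.add_one_le_iff, smul_eq_mul, one_div,
    PiLp.single_apply, Fin.ext_iff, Fin.val_rev]
  split_ifs <;> first | (exfalso; omega) | ring

theorem norm_single_sub_single {ι : Type*} [Fintype ι] [DecidableEq ι] {a b : ι} (hab : a ≠ b) :
    ‖EuclideanSpace.single a (1 : ℝ) - EuclideanSpace.single b 1‖ = √2 := by
  rw [← Real.sqrt_sq (norm_nonneg _), norm_sub_sq_real, EuclideanSpace.inner_single_left,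
    PiLp.single_apply, if_neg hab, PiLp.norm_single, PiLp.norm_single]
  norm_num

theorem infDist_vFT_succ_castSucc (m : ℕ) (j : Fin m) :
    infDist (vFT (m + 1) δ j.succ.castSucc)
        (affineSpan ℝ (vFT (m + 1) δ '' {x | x ≠ j.succ.castSucc}) :
          Set (EuclideanSpace ℝ (Fin (m + 1)))) = 1 / √2 := by
  have hS : ∀ x ∈ vFT (m + 1) δ '' {x | x ≠ j.succ.castSucc},
      ⟪EuclideanSpace.single j.rev.succ 1 - EuclideanSpace.single j.rev.castSucc 1, x⟫ = 0 := by
    rintro _ ⟨x, hx, rfl⟩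
    rw [inner_single_sub_single_vFT, if_neg]
    contrapose! hx
    simp only [Set.mem_ofPred_eq, not_not, Fin.ext_iff, Fin.val_rev, Fin.val_succ,
      Fin.val_castSucc] at hx ⊢
    omega
  have hvertex : ∀ x, x ≠ j.succ.castSucc →
      vFT (m + 1) δ x ∈ affineSpan ℝ (vFT (m + 1) δ '' {x | x ≠ j.succ.castSucc}) :=
    fun x hx ↦ subset_affineSpan ℝ _ ⟨x, hx, rfl⟩
  have hmid := AffineMap.lineMap_mem (⅟2 : ℝ)
    (hvertex j.castSucc.castSucc (by simp [Fin.ext_iff]))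
    (hvertex j.succ.succ (by simp [Fin.ext_iff]))
  rw [infDist_affineSpan_eq_of_sub_eq_smul hS hmid (vFT_sub_midpoint m j),
    norm_single_sub_single (by simp [Fin.ext_iff])]
  field_simp
  norm_num

noncomputable def facetNormalZero (m : ℕ) (δ : ℝ) : EuclideanSpace ℝ (Fin (m + 1)) :=
  WithLp.toLp 2 fun k ↦ (1 - δ) + if k = Fin.last m then δ * (m + 1) else 0

theorem inner_facetNormalZero (m : ℕ) (x : EuclideanSpace ℝ (Fin (m + 1))) :
    ⟪facetNormalZero m δ, x⟫ = (1 - δ) * ∑ k, x k + δ * (m + 1) * x (Fin.last m) := by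
  simp only [facetNormalZero, PiLp.inner_apply, RCLike.inner_apply, conj_trivial, mul_add,
    mul_ite, mul_zero, sum_add_distrib, sum_ite_eq', mem_univ, if_true, ← sum_mul]
  ring

theorem inner_facetNormalZero_vFT (m : ℕ) {j : Fin (m + 2)} (hj : j ≠ 0) :
    ⟪facetNormalZero m δ, vFT (m + 1) δ j⟫ = δ * (m + 1) := by
  have hj1 : 1 ≤ (j : ℕ) := Nat.one_le_iff_ne_zero.2 (Fin.val_ne_zero_iff.2 hj)
  rw [inner_facetNormalZero, sum_vFT, vFT_apply, Fin.val_last, if_pos (by omega)]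
  push_cast
  field_simp
  ring

theorem norm_facetNormalZero (m : ℕ) :
    ‖facetNormalZero m δ‖ = √((m + 1) * (δ ^ 2 * m + 1)) := by
  rw [← Real.sqrt_sq (norm_nonneg _), ← real_inner_self_eq_norm_sq, inner_facetNormalZero]
  simp only [facetNormalZero, PiLp.toLp_apply, sum_add_distrib, sum_const, card_univ,
    Fintype.card_fin, nsmul_eq_mul, sum_ite_eq', mem_univ, if_true]
  congr 1
  push_cast
  ring

theorem lineMap_vFT_one_last (m : ℕ) :
    AffineMap.lineMap (vFT (m + 1) δ 1) (vFT (m + 1) δ (Fin.last _))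
        ((1 - δ ^ 2) / (δ ^ 2 * m + 1)) =
      (δ / (δ ^ 2 * m + 1)) • facetNormalZero m δ := by
  have hD : δ ^ 2 * m + 1 ≠ 0 := by positivity
  ext k
  simp only [AffineMap.lineMap_apply_module, PiLp.add_apply, PiLp.smul_apply, vFT_apply,
    Fin.coe_ofNat_eq_mod, Nat.one_mod, add_tsub_cancel_right, Nat.cast_add, Nat.cast_one, mul_one,
    smul_eq_mul, Fin.val_last, tsub_self, zero_le, ↓reduceIte, facetNormalZero, Fin.ext_iff]
  split_ifs <;> first | (exfalso; omega) | (field_simp; ring)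

theorem infDist_vFT_zero (m : ℕ) (hδ : 0 ≤ δ) :
    infDist (vFT (m + 1) δ 0)
        (affineSpan ℝ (vFT (m + 1) δ '' {j | j ≠ 0}) : Set (EuclideanSpace ℝ (Fin (m + 1)))) =
      δ * √(m + 1) / √(δ ^ 2 * m + 1) := by
  have hS : ∀ x ∈ vFT (m + 1) δ '' {j | j ≠ 0}, ⟪facetNormalZero m δ, x⟫ = δ * (m + 1) := by
    rintro _ ⟨j, hj, rfl⟩
    exact inner_facetNormalZero_vFT m hj
  have hvertex : ∀ j : Fin (m + 2), j ≠ 0 →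
      vFT (m + 1) δ j ∈ affineSpan ℝ (vFT (m + 1) δ '' {j | j ≠ 0}) :=
    fun j hj ↦ subset_affineSpan ℝ _ ⟨j, hj, rfl⟩
  have hfoot := AffineMap.lineMap_mem ((1 - δ ^ 2) / (δ ^ 2 * m + 1))
    (hvertex 1 one_ne_zero) (hvertex (Fin.last _) (Fin.last_pos.ne'))
  rw [lineMap_vFT_one_last] at hfoot
  rw [infDist_affineSpan_eq_of_sub_eq_smul hS hfoot (t := -(δ / (δ ^ 2 * m + 1)))
    (by rw [vFT_zero, zero_sub, neg_smul]), norm_facetNormalZero, abs_neg,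
    abs_of_nonneg (by positivity), Real.sqrt_mul (by positivity)]
  have hD : 0 < √(δ ^ 2 * m + 1) := Real.sqrt_pos.2 (by positivity)
  field_simp
  rw [Real.sq_sqrt (by positivity)]

end Freudenthal

theorem stmt_10 (d : ℕ) (hd : 0 < d) (δ : ℝ) (h0 : 0 < δ) :
    Metric.infDist (vFT d δ 0)
        (affineSpan ℝ (vFT d δ '' {j | j ≠ 0}) : Set (EuclideanSpace ℝ (Fin d))) =
      δ * Real.sqrt d / Real.sqrt (δ ^ 2 * d - δ ^ 2 + 1) ∧
    ∀ i : Fin (d + 1), 1 ≤ (i : ℕ) → (i : ℕ) ≤ d - 1 →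
      Metric.infDist (vFT d δ i)
          (affineSpan ℝ (vFT d δ '' {j | j ≠ i}) : Set (EuclideanSpace ℝ (Fin d))) =
        1 / Real.sqrt 2 := by
  obtain ⟨m, rfl⟩ : ∃ m, d = m + 1 := ⟨d - 1, by omega⟩
  refine ⟨?_, fun i hi1 hi2 ↦ ?_⟩
  · rw [infDist_vFT_zero m h0.le]
    push_cast
    ring_nf
  · obtain ⟨j, rfl⟩ : ∃ j : Fin m, j.succ.castSucc = i :=
      ⟨⟨i - 1, by omega⟩, Fin.ext (by simp only [Fin.val_castSucc, Fin.val_succ]; omega)⟩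
    exact infDist_vFT_succ_castSucc m j
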